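/- Let X_1, …, X_d be independent real random variables on a probability space, let N_i : ℝ → ℝ be measurable functions with each N_i(X_i) square-integrable, and let M := Σ_{i=1}^d N_i(X_i). Define the game val(u) := Var(E[M | (X_i)_{i∈u}]) for u ⊆ Fin d. Then for every player i, the Shapley value satisfies Sh_i(val) = Var(N_i(X_i)). -/

import Mathlib

open MeasureTheory ProbabilityTheory

noncomputable def Shapley {d : ℕ} (val : Finset (Fin d) → ℝ) (i : Fin d) : ℝ :=
  (d : ℝ)⁻¹ *
    ∑ v ∈ (({i}ᶜ : Finset (Fin d))).powerset,
      (((d - 1).choose v.card : ℝ))⁻¹ * (val (v ∪ {i}) - val v)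

/-! Conditioning `M` on the inputs indexed by `u` keeps the summands `N_j(X_j)`, `j ∈ u`, and,
by independence, replaces every other summand by its mean. The summands being independent, hence
uncorrelated, `val u = ∑_{j ∈ u} Var(N_j(X_j))`: the game is additive. Every marginal
contribution of `i` is then `Var(N_i(X_i))`, and the Shapley weights sum to one because
`∑_{v ⊆ [d] ∖ {i}} C(d-1, |v|)⁻¹ = d`. -/

open Finset

theorem sum_powerset_inv_choose_card {α : Type*} (s : Finset α) :
    ∑ v ∈ s.powerset, ((#s).choose #v : ℝ)⁻¹ = #s + 1 := by
  rw [sum_powerset_apply_card fun k => ((#s).choose k : ℝ)⁻¹]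
  have hterm : ∀ k ∈ range (#s + 1), (#s).choose k • ((#s).choose k : ℝ)⁻¹ = 1 := by
    intro k hk
    rw [nsmul_eq_mul, mul_inv_cancel₀]
    exact_mod_cast (Nat.choose_pos (Nat.lt_succ_iff.mp (mem_range.mp hk))).ne'
  rw [sum_congr rfl hterm, sum_const, card_range, nsmul_one]
  push_cast
  rfl

theorem shapley_eq_of_marginal_eq {d : ℕ} (val : Finset (Fin d) → ℝ) (i : Fin d) (c : ℝ)
    (h : ∀ v, i ∉ v → val (v ∪ {i}) - val v = c) : Shapley val i = c := by
  have hcard : #({i}ᶜ : Finset (Fin d)) = d - 1 := by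
    rw [card_compl, card_singleton, Fintype.card_fin]
  have hmarg : ∀ v ∈ ({i}ᶜ : Finset (Fin d)).powerset, val (v ∪ {i}) - val v = c :=
    fun v hv => h v fun hi => by simpa using mem_powerset.mp hv hi
  have hd : ((d - 1 : ℕ) : ℝ) + 1 = d := by
    have := i.pos; norm_cast; omega
  have hd0 : (d : ℝ) ≠ 0 := by exact_mod_cast i.pos.ne'
  rw [Shapley, sum_congr rfl fun v hv => by rw [hmarg v hv], ← sum_mul, ← hcard,
    sum_powerset_inv_choose_card, hcard, hd, ← mul_assoc, inv_mul_cancel₀ hd0, one_mul]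

theorem shapley_sum {d : ℕ} (a : Fin d → ℝ) (i : Fin d) :
    Shapley (fun u => ∑ j ∈ u, a j) i = a i :=
  shapley_eq_of_marginal_eq _ i _ fun v hi => by
    rw [union_comm, ← insert_eq, sum_insert hi, add_sub_cancel_right]

section AdditiveModel

variable {Ω ι : Type*} {mΩ : MeasurableSpace Ω} {μ : Measure Ω} [IsProbabilityMeasure μ]
  {β : ι → Type*} [∀ j, MeasurableSpace (β j)] {X : ∀ j, Ω → β j} {N : ∀ j, β j → ℝ}
  {u : Finset ι} {j : ι}

local notation "σ[" X " | " u "]" => ⨆ j ∈ u, MeasurableSpace.comap (X j) inferInstance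

lemma iSup_comap_le (hX : ∀ j, Measurable (X j)) (u : Finset ι) : σ[X | u] ≤ mΩ :=
  iSup₂_le fun j _ => (hX j).comap_le

lemma condExp_comp_of_mem (hX : ∀ j, Measurable (X j)) (hN : Measurable (N j))
    (hint : Integrable (fun ω => N j (X j ω)) μ) (hj : j ∈ u) :
    μ[fun ω => N j (X j ω) | σ[X | u]] = fun ω => N j (X j ω) :=
  condExp_of_stronglyMeasurable (iSup_comap_le hX u)
    ((hN.comp (comap_measurable (X j))).mono (le_iSup₂_of_le j hj le_rfl)
      le_rfl).stronglyMeasurable hint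

lemma condExp_comp_of_notMem (hX : ∀ j, Measurable (X j)) (hindep : iIndepFun X μ)
    (hN : Measurable (N j)) (hj : j ∉ u) :
    μ[fun ω => N j (X j ω) | σ[X | u]] =ᵐ[μ] fun _ => μ[fun ω => N j (X j ω)] := by
  have hindep_u : Indep (MeasurableSpace.comap (X j) inferInstance) σ[X | u] μ := by
    have := indep_iSup_of_disjoint (fun k => (hX k).comap_le)
      ((iIndepFun_iff_iIndep _ X μ).mp hindep)
      (Set.disjoint_singleton_left.mpr (mem_coe.not.mpr hj))
    simpa only [Set.mem_singleton_iff, iSup_iSup_eq_left, mem_coe] using this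
  exact condExp_indep_eq (hX j).comap_le (iSup_comap_le hX u)
    (hN.comp (comap_measurable (X j))).stronglyMeasurable hindep_u

lemma condExp_sum_comp [Fintype ι] [DecidableEq ι] (hX : ∀ j, Measurable (X j))
    (hindep : iIndepFun X μ) (hN : ∀ j, Measurable (N j))
    (hint : ∀ j, Integrable (fun ω => N j (X j ω)) μ) (u : Finset ι) :
    μ[fun ω => ∑ j, N j (X j ω) | σ[X | u]] =ᵐ[μ]
      fun ω => ∑ j ∈ u, N j (X j ω) + ∑ j ∈ uᶜ, μ[fun ω => N j (X j ω)] := by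
  set f : ι → Ω → ℝ := fun j ω => N j (X j ω)
  calc μ[fun ω => ∑ j, f j ω | σ[X | u]]
      = μ[∑ j, f j | σ[X | u]] := by simp only [sum_fn]
    _ =ᵐ[μ] ∑ j, μ[f j | σ[X | u]] := condExp_finsetSum (fun j _ => hint j) _
    _ = ∑ j ∈ u, μ[f j | σ[X | u]] + ∑ j ∈ uᶜ, μ[f j | σ[X | u]] :=
        (sum_add_sum_compl u _).symm
    _ =ᵐ[μ] ∑ j ∈ u, f j + ∑ j ∈ uᶜ, fun _ => μ[f j] :=
        (Filter.EventuallyEq.of_eq (sum_congr rfl fun j hj =>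
          condExp_comp_of_mem hX (hN j) (hint j) hj)).add
        (eventuallyEq_sum fun j hj =>
          condExp_comp_of_notMem hX hindep (hN j) (mem_compl.mp hj))
    _ = fun ω => ∑ j ∈ u, f j ω + ∑ j ∈ uᶜ, μ[f j] := by simp only [sum_fn]; rfl

theorem variance_condExp_sum_comp [Fintype ι] (hX : ∀ j, Measurable (X j))
    (hindep : iIndepFun X μ) (hN : ∀ j, Measurable (N j))
    (hL2 : ∀ j, MemLp (fun ω => N j (X j ω)) 2 μ) (u : Finset ι) :
    variance (μ[fun ω => ∑ j, N j (X j ω) | σ[X | u]]) μ =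
      ∑ j ∈ u, variance (fun ω => N j (X j ω)) μ := by
  classical
  have hint j : Integrable (fun ω => N j (X j ω)) μ := (hL2 j).integrable one_le_two
  rw [variance_congr (condExp_sum_comp hX hindep hN hint u),
    variance_add_const (integrable_finsetSum u fun j _ => hint j).aestronglyMeasurable,
    ← sum_fn]
  exact IndepFun.variance_sum (fun j _ => hL2 j)
    fun a _ b _ hab => (hindep.comp N hN).indepFun hab

end AdditiveModel

theorem shapley_additive_model_general
    {Ω : Type*} [m0 : MeasurableSpace Ω] (μ : Measure Ω) [IsProbabilityMeasure μ]
    {d : ℕ}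
    (X : Fin d → Ω → ℝ) (hXm : ∀ i, Measurable (X i))
    (hindep : iIndepFun X μ)
    (N : Fin d → ℝ → ℝ) (hNm : ∀ i, Measurable (N i))
    (hNL2 : ∀ i, MemLp (fun ω => N i (X i ω)) 2 μ)
    (i : Fin d) :
    Shapley
      (fun u => variance
        (μ[fun ω => ∑ j : Fin d, N j (X j ω) |
            ⨆ j ∈ u, MeasurableSpace.comap (X j) inferInstance]) μ) i
      = variance (fun ω => N i (X i ω)) μ := by
  simp_rw [variance_condExp_sum_comp hXm hindep hNm hNL2]
  exact shapley_sum _ i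

/-- For an additive model `M = Σ_i N_i(X_i)` with independent inputs,
the Shapley effect of input `i` in the relative-importance game
`val(u) = Var(E[M | (X_j)_{j∈u}])` is `Var(N_i(X_i))`. -/
theorem shapley_additive_model
    {Ω : Type*} [m0 : MeasurableSpace Ω] (μ : Measure Ω) [IsProbabilityMeasure μ]
    {d : ℕ} (hd : 1 ≤ d)
    (X : Fin d → Ω → ℝ) (hXm : ∀ i, Measurable (X i))
    (hindep : iIndepFun X μ)
    (N : Fin d → ℝ → ℝ) (hNm : ∀ i, Measurable (N i))
    (hNL2 : ∀ i, MemLp (fun ω => N i (X i ω)) 2 μ)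
    (i : Fin d) :
    Shapley
      (fun u => variance
        (μ[fun ω => ∑ j : Fin d, N j (X j ω) |
            ⨆ j ∈ u, MeasurableSpace.comap (X j) inferInstance]) μ) i
      = variance (fun ω => N i (X i ω)) μ :=
  shapley_additive_model_general (m0 := m0) μ X hXm hindep N hNm hNL2 i
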